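/- Let X be a compact metric space, Q continuous, X Q-amenable. Then for every non-empty open ball B, inf_{x∈B} Q(x) ≤ dim_H(B) ≤ sup_{x∈B} Q(x). -/

import Mathlib

/-!
If `Q ≤ d` on a neighbourhood of `B`, a small ball `U` meeting `B` has its centre `c` in that
neighbourhood, so its weight `|U|^{Q(c)}` is at least `|U|^d` (as `|U| ≤ 1`); hence
`μH[d] B ≤ λ^{Q_c} B`. If `Q ≥ d` on `B`, a small set `t` meeting `B` at `y` lies in balls centred
at `y` of radius just above `|t|`, of weight at most about `(2|t|)^d`; hence
`λ^{Q_c} B ≤ 2^d μH[d] B`. For a ball, `0 < λ^{Q_c} B < ∞`, so `μH[d] B ≠ 0` for `d < inf_B Q`, and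
`μH[d] B < ∞` for every `d > sup_B Q` because `Q` is uniformly continuous on the compact space.
-/

open Set MeasureTheory ENNReal

/-- The spherical Carathéodory measure `λ^{Q_c}` with weight `|B_r(x)|^{Q(x)}` on open
balls (weight `∞` for sets that are not open balls, realized as an infimum over ball
representations). -/
noncomputable def lambdaQc (X : Type*) [MetricSpace X] [MeasurableSpace X] [BorelSpace X]
    (Q : X → ℝ) : Measure X :=
  Measure.mkMetric'
    (fun U => ⨅ (x : X) (r : ℝ≥0∞) (_ : U = EMetric.ball x r), EMetric.diam U ^ Q x)

open Metric Topology NNReal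

section

variable {X : Type*} [MetricSpace X]

namespace MeasureTheory.OuterMeasure

theorem mkMetric'_apply_le_mkMetric'_apply {m₁ m₂ : Set X → ℝ≥0∞} {s : Set X}
    (h : ∀ ε > 0, ∃ ε' > 0, ∀ t, ediam t ≤ ε' → (t ∩ s).Nonempty →
      mkMetric'.pre m₁ ε (t ∩ s) ≤ m₂ t) :
    mkMetric' m₁ s ≤ mkMetric' m₂ s := by
  simp only [mkMetric', iSup_apply]
  refine iSup₂_le fun ε hε => ?_
  obtain ⟨ε', hε', hle⟩ := h ε hε
  have hrestrict : restrict s (mkMetric'.pre m₁ ε) ≤ mkMetric'.pre m₂ ε' :=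
    mkMetric'.le_pre.2 fun t ht => by
      rw [restrict_apply]
      rcases (t ∩ s).eq_empty_or_nonempty with hempty | hne
      · simp [hempty]
      · exact hle t ht hne
  refine le_iSup₂_of_le ε' hε' ?_
  simpa using hrestrict s

end MeasureTheory.OuterMeasure

theorem hausdorffMeasure_apply_eq_mkMetric' [MeasurableSpace X] [BorelSpace X] (d : ℝ)
    (s : Set X) : μH[d] s = OuterMeasure.mkMetric' (fun t => ediam t ^ d) s := by
  rw [Measure.hausdorffMeasure, ← OuterMeasure.coe_mkMetric]
  rfl

theorem rpow_mul_hausdorffMeasure_apply_eq_mkMetric' [MeasurableSpace X] [BorelSpace X]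
    {c : ℝ≥0∞} (hc₀ : c ≠ 0) (hc : c ≠ ⊤) {d : ℝ} (hd : 0 ≤ d) (s : Set X) :
    c ^ d * μH[d] s = OuterMeasure.mkMetric' (fun t => (c * ediam t) ^ d) s := by
  have hsmul : (c ^ d • fun r : ℝ≥0∞ => r ^ d) = fun r => (c * r) ^ d := by
    ext r
    exact (ENNReal.mul_rpow_of_nonneg c r hd).symm
  rw [Measure.hausdorffMeasure, ← OuterMeasure.coe_mkMetric, ← smul_eq_mul,
    ← OuterMeasure.smul_apply, ← OuterMeasure.mkMetric_smul _ (ENNReal.rpow_ne_top_of_nonneg hd hc)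
      (ENNReal.rpow_pos (pos_iff_ne_zero.2 hc₀) hc).ne', hsmul]
  rfl

theorem exists_pos_lt_top_eball_eq [BoundedSpace X] {x : X} {r : ℝ≥0∞}
    (h : (eball x r).Nonempty) :
    ∃ R, 0 < R ∧ R < ⊤ ∧ eball x r = eball x R := by
  obtain ⟨y, hy⟩ := h
  have hdiam : ediam (univ : Set X) ≠ ⊤ := (Bornology.isBounded_univ.2 inferInstance).ediam_ne_top
  refine ⟨min r (ediam (univ : Set X) + 1), lt_min (pos_of_gt hy) (by simp), ?_, ?_⟩
  · exact (min_le_right _ _).trans_lt (ENNReal.add_lt_top.2 ⟨hdiam.lt_top, one_lt_top⟩)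
  · ext z
    simp only [mem_eball, lt_min_iff, iff_self_and]
    exact fun _ => (edist_le_ediam_of_mem (mem_univ z) (mem_univ x)).trans_lt
      (ENNReal.lt_add_right hdiam one_ne_zero)

theorem Continuous.exists_thickening_lt_add [CompactSpace X] {Q : X → ℝ} (hQ : Continuous Q)
    {s : Set X} {M η : ℝ} (hM : ∀ y ∈ s, Q y ≤ M) (hη : 0 < η) :
    ∃ δ > 0, ∀ x ∈ thickening δ s, Q x < M + η := by
  obtain ⟨δ, hδ, hclose⟩ := Metric.uniformContinuous_iff.1
    (CompactSpace.uniformContinuous_of_continuous hQ) η hη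
  refine ⟨δ, hδ, fun x hx => ?_⟩
  obtain ⟨y, hy, hxy⟩ := mem_thickening_iff.1 hx
  have := hclose hxy
  rw [Real.dist_eq] at this
  linarith [hM y hy, (abs_lt.1 this).2]

noncomputable def sphericalGauge (Q : X → ℝ) (U : Set X) : ℝ≥0∞ :=
  ⨅ (x : X) (r : ℝ≥0∞) (_ : U = eball x r), ediam U ^ Q x

theorem sphericalGauge_eball_le (Q : X → ℝ) (x : X) (r : ℝ≥0∞) :
    sphericalGauge Q (eball x r) ≤ ediam (eball x r) ^ Q x :=
  iInf₂_le_of_le x r (iInf_le _ rfl)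

theorem mkMetric'_pre_sphericalGauge_le {Q : X → ℝ} {ε r : ℝ≥0∞} {d : ℝ} {u : Set X} {y : X}
    (hε : ε ≤ 1) (hy : y ∈ u) (hd : 0 ≤ d) (hQ : d ≤ Q y) (hr : ediam u < r) (h2r : 2 * r ≤ ε) :
    OuterMeasure.mkMetric'.pre (sphericalGauge Q) ε u ≤ (2 * r) ^ d := by
  have hu : u ⊆ eball y r := fun z hz => (edist_le_ediam_of_mem hz hy).trans_lt hr
  calc OuterMeasure.mkMetric'.pre (sphericalGauge Q) ε u
      ≤ OuterMeasure.mkMetric'.pre (sphericalGauge Q) ε (eball y r) := measure_mono hu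
    _ ≤ sphericalGauge Q (eball y r) := OuterMeasure.mkMetric'.pre_le (ediam_eball_le.trans h2r)
    _ ≤ ediam (eball y r) ^ Q y := sphericalGauge_eball_le Q y r
    _ ≤ (2 * r) ^ Q y := ENNReal.rpow_le_rpow ediam_eball_le (hd.trans hQ)
    _ ≤ (2 * r) ^ d := ENNReal.rpow_le_rpow_of_exponent_ge (h2r.trans hε) hQ

theorem mkMetric'_pre_sphericalGauge_le_two_mul_ediam {Q : X → ℝ} {ε : ℝ≥0∞} {d : ℝ}
    {u : Set X} {y : X} (hε : ε ≤ 1) (hy : y ∈ u) (hd : 0 ≤ d) (hQ : d ≤ Q y)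
    (hu : ediam u < ε / 2) :
    OuterMeasure.mkMetric'.pre (sphericalGauge Q) ε u ≤ (2 * ediam u) ^ d := by
  -- Letting `r ↓ ediam u` also handles singletons, which lie in no ball of radius `ediam u = 0`.
  have : (𝓝[>] ediam u).NeBot := nhdsGT_neBot_of_exists_gt ⟨_, hu⟩
  have hcont : Continuous fun r : ℝ≥0∞ => (2 * r) ^ d :=
    ENNReal.continuous_rpow_const.comp (ENNReal.continuous_const_mul ofNat_ne_top)
  refine ge_of_tendsto (x := 𝓝[>] ediam u) (hcont.continuousAt.mono_left nhdsWithin_le_nhds) ?_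
  filter_upwards [Ioo_mem_nhdsGT hu] with r hr
  refine mkMetric'_pre_sphericalGauge_le hε hy hd hQ hr.1 ?_
  rw [mul_comm]
  exact ((ENNReal.lt_div_iff_mul_lt (Or.inl two_ne_zero) (Or.inl ofNat_ne_top)).1 hr.2).le

variable [MeasurableSpace X] [BorelSpace X]

theorem lambdaQc_apply (Q : X → ℝ) {s : Set X} (hs : MeasurableSet s) :
    lambdaQc X Q s = OuterMeasure.mkMetric' (sphericalGauge Q) s :=
  toMeasure_apply _ (OuterMeasure.mkMetric'_isMetric _).le_caratheodory hs

theorem hausdorffMeasure_le_lambdaQc {Q : X → ℝ} {s : Set X} (hs : MeasurableSet s) {d δ : ℝ}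
    (hδ : 0 < δ) (hQ : ∀ x ∈ thickening δ s, Q x ≤ d) : μH[d] s ≤ lambdaQc X Q s := by
  rw [lambdaQc_apply Q hs, hausdorffMeasure_apply_eq_mkMetric']
  refine OuterMeasure.mkMetric'_apply_le_mkMetric'_apply fun ε hε => ?_
  have hδ' : 0 < ENNReal.ofReal δ / 2 := ENNReal.half_pos (ENNReal.ofReal_pos.2 hδ).ne'
  refine ⟨min ε (min 1 (ENNReal.ofReal δ / 2)), lt_min hε (lt_min one_pos hδ'),
    fun t ht ⟨y, hyt, hys⟩ => ?_⟩
  have hdiam_le : ediam t ≤ ε := ht.trans (min_le_left _ _)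
  have hdiam_one : ediam t ≤ 1 := ht.trans ((min_le_right _ _).trans (min_le_left _ _))
  have hdiam_δ : ediam t < ENNReal.ofReal δ := ht.trans_lt <| (min_le_right _ _).trans_lt <|
    (min_le_right _ _).trans_lt (ENNReal.half_lt_self (ENNReal.ofReal_pos.2 hδ).ne' ofReal_ne_top)
  calc OuterMeasure.mkMetric'.pre _ ε (t ∩ s) ≤ OuterMeasure.mkMetric'.pre _ ε t :=
        measure_mono inter_subset_left
    _ ≤ ediam t ^ d := OuterMeasure.mkMetric'.pre_le hdiam_le
    _ ≤ sphericalGauge Q t := by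
      refine le_iInf₂ fun x r => le_iInf fun htx => ?_
      have hx : x ∈ t := htx ▸ mem_eball_self (pos_of_gt (htx ▸ hyt : y ∈ eball x r))
      have hxs : x ∈ thickening δ s := mem_thickening_iff.2
        ⟨y, hys, edist_lt_ofReal.1 ((edist_le_ediam_of_mem hx hyt).trans_lt hdiam_δ)⟩
      exact ENNReal.rpow_le_rpow_of_exponent_ge hdiam_one (hQ x hxs)

theorem lambdaQc_le_two_rpow_mul_hausdorffMeasure {Q : X → ℝ} {s : Set X} (hs : MeasurableSet s)
    {d : ℝ} (hd : 0 ≤ d) (hQ : ∀ y ∈ s, d ≤ Q y) : lambdaQc X Q s ≤ 2 ^ d * μH[d] s := by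
  rw [lambdaQc_apply Q hs, rpow_mul_hausdorffMeasure_apply_eq_mkMetric' two_ne_zero ofNat_ne_top hd]
  refine OuterMeasure.mkMetric'_apply_le_mkMetric'_apply fun ε hε => ?_
  set ε₁ := min ε 1
  have hε₁ : 0 < ε₁ := lt_min hε one_pos
  have hquarter : ε₁ / 4 < ε₁ / 2 := ENNReal.div_lt_div_left hε₁.ne'
    (ne_top_of_le_ne_top one_ne_top (min_le_right _ _)) (by norm_num)
  refine ⟨ε₁ / 4, ENNReal.div_pos hε₁.ne' ofNat_ne_top, fun t ht ⟨y, hyt, hys⟩ => ?_⟩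
  have hdiam : ediam (t ∩ s) ≤ ediam t := ediam_mono inter_subset_left
  calc OuterMeasure.mkMetric'.pre _ ε (t ∩ s) ≤ OuterMeasure.mkMetric'.pre _ ε₁ (t ∩ s) :=
        OuterMeasure.mkMetric'.mono_pre _ (min_le_left _ _) _
    _ ≤ (2 * ediam (t ∩ s)) ^ d := mkMetric'_pre_sphericalGauge_le_two_mul_ediam
        (min_le_right _ _) ⟨hyt, hys⟩ hd (hQ y hys) ((hdiam.trans ht).trans_lt hquarter)
    _ ≤ (2 * ediam t) ^ d := by gcongr

end

theorem dimH_ball_between_inf_sup_general {X : Type*} [MetricSpace X] [MeasurableSpace X]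
    [BorelSpace X] [CompactSpace X] (Q : X → ℝ)
    (hQcont : Continuous Q)
    (ham : ∀ (x : X) (r : ℝ≥0∞), 0 < r → r < ⊤ → (EMetric.ball x r).Nonempty →
      0 < lambdaQc X Q (EMetric.ball x r) ∧ lambdaQc X Q (EMetric.ball x r) < ⊤) :
    ∀ (x : X) (r : ℝ≥0∞), (EMetric.ball x r).Nonempty →
      ENNReal.ofReal (⨅ y : ↥(EMetric.ball x r), Q y) ≤ dimH (EMetric.ball x r) ∧
      dimH (EMetric.ball x r) ≤ ENNReal.ofReal (⨆ y : ↥(EMetric.ball x r), Q y) := by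
  intro x r hne
  rw [show @EMetric.ball X _ = eball from rfl] at ham hne ⊢
  obtain ⟨R, hR0, hRtop, hBR⟩ := exists_pos_lt_top_eball_eq hne
  rw [hBR] at hne ⊢
  set B := eball x R
  obtain ⟨hpos, hfin⟩ := ham x R hR0 hRtop hne
  have hB : MeasurableSet B := isOpen_eball.measurableSet
  have hrange : range (fun y : B => Q y) ⊆ range Q := range_comp_subset_range _ _
  constructor
  · refine ENNReal.le_of_forall_nnreal_lt fun d hd =>
      le_dimH_of_hausdorffMeasure_ne_zero fun h0 => hpos.ne' ?_
    have hdQ : ∀ y ∈ B, (d : ℝ) ≤ Q y := fun y hy => (ENNReal.coe_lt_ofReal.1 hd).le.trans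
      (ciInf_le ((isCompact_range hQcont).bddBelow.mono hrange) ⟨y, hy⟩)
    have hle := lambdaQc_le_two_rpow_mul_hausdorffMeasure hB d.coe_nonneg hdQ
    rwa [h0, mul_zero, nonpos_iff_eq_zero] at hle
  · refine ENNReal.le_of_forall_pos_le_add fun η hη _ => ?_
    obtain ⟨δ, hδ, hQδ⟩ := hQcont.exists_thickening_lt_add
      (fun y hy => le_ciSup ((isCompact_range hQcont).bddAbove.mono hrange) ⟨y, hy⟩) hη
    set M := ⨆ y : B, Q y
    have hfin' : μH[(M.toNNReal + η : ℝ≥0)] B ≠ ⊤ := by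
      refine ((hausdorffMeasure_le_lambdaQc hB hδ fun c hc => (hQδ c hc).le.trans ?_).trans_lt
        hfin).ne
      simp
    exact (dimH_le_of_hausdorffMeasure_ne_top hfin').trans_eq (by simp [ENNReal.ofReal])

/-- If `X` is compact, `Q : X → [0,∞)` is continuous and `X` is `Q`-amenable, then every
nonempty open ball `B` satisfies `inf_{y ∈ B} Q(y) ≤ dim_H B ≤ sup_{y ∈ B} Q(y)`. -/
theorem dimH_ball_between_inf_sup {X : Type*} [MetricSpace X] [MeasurableSpace X]
    [BorelSpace X] [CompactSpace X] (Q : X → ℝ) (hQ0 : ∀ x, 0 ≤ Q x)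
    (hQcont : Continuous Q)
    (ham : ∀ (x : X) (r : ℝ≥0∞), 0 < r → r < ⊤ → (EMetric.ball x r).Nonempty →
      0 < lambdaQc X Q (EMetric.ball x r) ∧ lambdaQc X Q (EMetric.ball x r) < ⊤) :
    ∀ (x : X) (r : ℝ≥0∞), (EMetric.ball x r).Nonempty →
      ENNReal.ofReal (⨅ y : ↥(EMetric.ball x r), Q y) ≤ dimH (EMetric.ball x r) ∧
      dimH (EMetric.ball x r) ≤ ENNReal.ofReal (⨆ y : ↥(EMetric.ball x r), Q y) :=
  dimH_ball_between_inf_sup_general Q hQcont ham
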